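/- Let T > 0 and let ν, μ be probability measures on ℝ^d with Lebesgue densities (also denoted ν, μ). Let r be the measure on ℝ^d × ℝ^d with Lebesgue density r(z,x) = ν(z)·(2πT)^{-d/2}·exp(-‖x-z‖²/(2T)). Then for every coupling π of (ν, μ) (a probability measure on ℝ^d × ℝ^d whose first marginal is ν and second marginal is μ) that is absolutely continuous with respect to ν ⊗ μ, has finite transport cost ∫‖x-z‖² dπ(z,x) < ∞, finite relative entropy D_KL(π ‖ ν⊗μ) < ∞, and such that log μ is μ-integrable, one has the identity D_KL(π ‖ r) = (1/(2T))·∫‖x-z‖² dπ(z,x) + D_KL(π ‖ ν⊗μ) + ∫ log μ dμ + (d/2)·log(2πT). In particular, minimizing D_KL(π ‖ r) over couplings of (ν, μ) is equivalent to minimizing the entropy-regularized optimal transport objective ∫ (1/2)‖x-z‖² dπ + T·D_KL(π ‖ ν⊗μ). -/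

import Mathlib

/-!
The reference measure is `r = ν ⊗ G` for the Gaussian transition density
`G(z, x) = (2πT)^{-d/2} exp(-‖x - z‖² / (2T))`, so `ν ⊗ μ = r.withDensity (μ(x) / G(z, x))`.
By the chain rule for Radon–Nikodym derivatives, `π`-almost everywhere
`log dπ/dr = log dπ/d(ν ⊗ μ) + log μ(x) - log G(z, x)`, and
`-log G(z, x) = ‖x - z‖² / (2T) + (d/2) log (2πT)`. Integrating against `π`, whose second
marginal is `μ`, gives the identity. The two objectives then differ by the factor `T > 0` and an
additive constant, hence have the same order on couplings.
-/

open MeasureTheory Real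

/-- The Kullback–Leibler divergence `∫ log (dP/dQ) dP` (as a real number, meaningful
when `P ≪ Q` and the log-likelihood ratio is `P`-integrable). -/
noncomputable def klDivR {α : Type*} [MeasurableSpace α] (P Q : Measure α) : ℝ :=
  ∫ x, llr P Q x ∂P

open scoped ENNReal

namespace MeasureTheory

variable {α β : Type*} [MeasurableSpace α] [MeasurableSpace β] {m : Measure α}
  {m₁ : Measure α} {m₂ : Measure β}

/- Densities given as arbitrary, possibly non-measurable, functions are replaced by measurable
versions defining the same measures. -/
lemma exists_measurable_withDensity_ofReal_eq [SFinite m] {f : α → ℝ} {ν : Measure α}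
    (hν : ν = m.withDensity fun x => ENNReal.ofReal (f x)) [IsFiniteMeasure ν] :
    ∃ g : α → ℝ, Measurable g ∧ 0 ≤ g ∧ (∀ x, ENNReal.ofReal (g x) ≤ ENNReal.ofReal (f x)) ∧
      ν = m.withDensity fun x => ENNReal.ofReal (g x) := by
  obtain ⟨g, hg, hgf, hgν⟩ := exists_measurable_le_withDensity_eq m fun x => ENNReal.ofReal (f x)
  rw [← hν] at hgν
  have hfin : ∫⁻ x, g x ∂m ≠ ∞ := by
    rw [← setLIntegral_univ, ← withDensity_apply _ .univ, hgν]
    exact measure_ne_top ν _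
  refine ⟨fun x => (g x).toReal, hg.ennreal_toReal, fun x => ENNReal.toReal_nonneg,
    fun x => ENNReal.ofReal_toReal_le.trans (hgf x), ?_⟩
  rw [← hgν]
  refine withDensity_congr_ae ?_
  filter_upwards [ae_lt_top hg hfin] with x hx
  exact (ENNReal.ofReal_toReal hx.ne).symm

lemma withDensity_mul_kernel_eq [SFinite m₁] [SFinite m₂] {f g : α → ℝ} (hg : Measurable g)
    (hgf : ∀ x, ENNReal.ofReal (g x) ≤ ENNReal.ofReal (f x))
    (hfg : (m₁.withDensity fun x => ENNReal.ofReal (f x)) =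
      m₁.withDensity fun x => ENNReal.ofReal (g x))
    [IsFiniteMeasure (m₁.withDensity fun x => ENNReal.ofReal (g x))]
    {k : α × β → ℝ} (hk : Measurable k) (hk₀ : 0 ≤ k)
    (hk₁ : ∀ z, ∫⁻ x, ENNReal.ofReal (k (z, x)) ∂m₂ = 1) :
    ((m₁.prod m₂).withDensity fun p => ENNReal.ofReal (f p.1 * k p)) =
      (m₁.prod m₂).withDensity fun p => ENNReal.ofReal (g p.1 * k p) := by
  have hsection : ∀ (h : α → ℝ) z,
      ∫⁻ x, ENNReal.ofReal (h z * k (z, x)) ∂m₂ = ENNReal.ofReal (h z) := fun h z => by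
    simp_rw [ENNReal.ofReal_mul' (hk₀ _)]
    rw [lintegral_const_mul' _ _ ENNReal.ofReal_ne_top, hk₁, mul_one]
  have hmass : ∀ h : α → ℝ, (m₁.withDensity fun x => ENNReal.ofReal (h x)) Set.univ =
      ∫⁻ x, ENNReal.ofReal (h x) ∂m₁ := fun h => by
    rw [withDensity_apply _ .univ, Measure.restrict_univ]
  have hg_mass : ((m₁.prod m₂).withDensity fun p => ENNReal.ofReal (g p.1 * k p)) Set.univ =
      ∫⁻ x, ENNReal.ofReal (g x) ∂m₁ := by
    rw [withDensity_apply _ .univ, Measure.restrict_univ, lintegral_prod _ (by fun_prop)]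
    simp_rw [hsection]
  have : IsFiniteMeasure ((m₁.prod m₂).withDensity fun p => ENNReal.ofReal (g p.1 * k p)) :=
    ⟨by rw [hg_mass, ← hmass]; exact measure_lt_top _ _⟩
  have hle : ((m₁.prod m₂).withDensity fun p => ENNReal.ofReal (g p.1 * k p)) ≤
      (m₁.prod m₂).withDensity fun p => ENNReal.ofReal (f p.1 * k p) :=
    withDensity_mono <| ae_of_all _ fun p => by
      simp only [ENNReal.ofReal_mul' (hk₀ p)]
      exact mul_le_mul_left (hgf p.1) _
  refine (Measure.eq_of_le_of_measure_univ_eq hle (le_antisymm (hle _) ?_)).symm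
  rw [hg_mass, ← hmass, ← hfg, hmass, withDensity_apply _ .univ, Measure.restrict_univ]
  refine (lintegral_prod_le _).trans_eq ?_
  simp_rw [hsection]

lemma ae_eq_of_withDensity_eq {f g : α → ℝ≥0∞} (hg : Measurable g)
    (hfg : m.withDensity f = m.withDensity g) [IsFiniteMeasure (m.withDensity g)]
    (hf : AEMeasurable f (m.withDensity g)) : f =ᵐ[m.withDensity g] g := by
  have hS : MeasurableSet {x | g x ≠ 0} := (hg (measurableSet_singleton 0)).compl
  have hac : m.restrict {x | g x ≠ 0} ≪ m.withDensity g := fun s hs => by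
    rw [withDensity_apply_eq_zero hg] at hs
    rwa [Measure.restrict_apply' hS, Set.inter_comm]
  have hfin : ∫⁻ x, f x ∂m.restrict {x | g x ≠ 0} ≠ ∞ := by
    rw [← withDensity_apply f hS, hfg]
    exact measure_ne_top _ _
  refine (ae_withDensity_iff_ae_restrict hg).2 <|
    (withDensity_eq_iff (hf.mono_ac hac) hg.aemeasurable hfin).1 ?_
  rw [← restrict_withDensity hS, hfg, restrict_withDensity hS]

lemma ae_eq_of_withDensity_ofReal_eq {f g : α → ℝ} (hg : Measurable g) (hg₀ : 0 ≤ g)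
    (hgf : ∀ x, ENNReal.ofReal (g x) ≤ ENNReal.ofReal (f x))
    (hfg : (m.withDensity fun x => ENNReal.ofReal (f x)) =
      m.withDensity fun x => ENNReal.ofReal (g x))
    [IsFiniteMeasure (m.withDensity fun x => ENNReal.ofReal (g x))]
    (hlog : AEMeasurable (fun x => log (f x)) (m.withDensity fun x => ENNReal.ofReal (g x))) :
    f =ᵐ[m.withDensity fun x => ENNReal.ofReal (g x)] g := by
  have hpos : ∀ᵐ x ∂m.withDensity fun x => ENNReal.ofReal (g x), 0 < f x :=
    (ae_withDensity_iff hg.ennreal_ofReal).2 <| ae_of_all _ fun x hx =>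
      ENNReal.ofReal_pos.1 ((pos_iff_ne_zero.2 hx).trans_le (hgf x))
  have hf : AEMeasurable (fun x => ENNReal.ofReal (f x))
      (m.withDensity fun x => ENNReal.ofReal (g x)) := by
    refine hlog.exp.ennreal_ofReal.congr ?_
    filter_upwards [hpos] with x hx
    rw [exp_log hx]
  filter_upwards [ae_eq_of_withDensity_eq hg.ennreal_ofReal hfg hf, hpos] with x hx hx₀
  exact (ENNReal.ofReal_eq_ofReal_iff hx₀.le (hg₀ x)).1 hx

lemma llr_ae_eq_llr_add_llr {μ ν κ : Measure α}
    [SigmaFinite μ] [SigmaFinite ν] [SigmaFinite κ] (hμν : μ ≪ ν) (hνκ : ν ≪ κ) :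
    llr μ κ =ᵐ[μ] llr μ ν + llr ν κ := by
  filter_upwards [(hμν.trans hνκ).ae_le (Measure.rnDeriv_mul_rnDeriv hμν),
    Measure.rnDeriv_pos hμν, hμν.ae_le (Measure.rnDeriv_lt_top μ ν),
    hμν.ae_le (Measure.rnDeriv_pos hνκ), (hμν.trans hνκ).ae_le (Measure.rnDeriv_lt_top ν κ)]
    with x hx hμν₀ hμν_top hνκ₀ hνκ_top
  simp only [llr_def, Pi.add_apply, ← hx, Pi.mul_apply, ENNReal.toReal_mul]
  exact log_mul (ENNReal.toReal_pos hμν₀.ne' hμν_top.ne).ne'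
    (ENNReal.toReal_pos hνκ₀.ne' hνκ_top.ne).ne'

lemma prod_withDensity_eq_withDensity_withDensity [SFinite m₁] [SFinite m₂] {fν : α → ℝ}
    {fμ : β → ℝ} {k : α × β → ℝ} (hfν : Measurable fν) (hfν₀ : 0 ≤ fν) (hfμ : Measurable fμ)
    (hk : Measurable k) (hk₀ : ∀ p, 0 < k p) :
    (m₁.withDensity fun z => ENNReal.ofReal (fν z)).prod
        (m₂.withDensity fun x => ENNReal.ofReal (fμ x)) =
      ((m₁.prod m₂).withDensity fun p => ENNReal.ofReal (fν p.1 * k p)).withDensity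
        fun p => ENNReal.ofReal (fμ p.2 / k p) := by
  rw [prod_withDensity (by fun_prop) (by fun_prop),
    ← withDensity_mul _ (by fun_prop) (by fun_prop)]
  congr with p
  rw [Pi.mul_apply, ← ENNReal.ofReal_mul (mul_nonneg (hfν₀ _) (hk₀ p).le),
    ← ENNReal.ofReal_mul (hfν₀ _)]
  congr 1
  field_simp [(hk₀ p).ne']

theorem klDivR_eq_klDivR_prod_add_integral_log [SigmaFinite m₁] [SigmaFinite m₂]
    {fν : α → ℝ} {fμ : β → ℝ} {k : α × β → ℝ} (hfν : Measurable fν) (hfν₀ : 0 ≤ fν)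
    (hfμ : Measurable fμ) (hk : Measurable k) (hk₀ : ∀ p, 0 < k p)
    {ν : Measure α} {μ : Measure β} {r γ : Measure (α × β)} [IsFiniteMeasure γ]
    (hν : ν = m₁.withDensity fun z => ENNReal.ofReal (fν z))
    (hμ : μ = m₂.withDensity fun x => ENNReal.ofReal (fμ x))
    (hr : r = (m₁.prod m₂).withDensity fun p => ENNReal.ofReal (fν p.1 * k p))
    (hγ : γ ≪ ν.prod μ) (hsnd : γ.map Prod.snd = μ) (hllr : Integrable (llr γ (ν.prod μ)) γ)
    (hlogμ : Integrable (fun x => log (fμ x)) μ) (hlogk : Integrable (fun p => log (k p)) γ) :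
    klDivR γ r = klDivR γ (ν.prod μ) + ∫ x, log (fμ x) ∂μ - ∫ p, log (k p) ∂γ := by
  have : SigmaFinite μ := hμ ▸ inferInstance
  have : SigmaFinite (ν.prod μ) := hν ▸ inferInstance
  have : SigmaFinite r := hr ▸ inferInstance
  have hprod : ν.prod μ = r.withDensity fun p => ENNReal.ofReal (fμ p.2 / k p) := by
    rw [hν, hμ, hr]
    exact prod_withDensity_eq_withDensity_withDensity hfν hfν₀ hfμ hk hk₀
  have hac : ν.prod μ ≪ r := hprod ▸ withDensity_absolutelyContinuous _ _
  have hrn : (ν.prod μ).rnDeriv r =ᵐ[r] fun p => ENNReal.ofReal (fμ p.2 / k p) :=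
    hprod ▸ Measure.rnDeriv_withDensity r (by fun_prop)
  have hfμ_pos : ∀ᵐ p ∂γ, 0 < fμ p.2 := by
    have h : ∀ᵐ x ∂γ.map Prod.snd, 0 < fμ x := by
      rw [hsnd, hμ]
      exact (ae_withDensity_iff hfμ.ennreal_ofReal).2 <| ae_of_all _ fun x hx =>
        ENNReal.ofReal_pos.1 (pos_iff_ne_zero.2 hx)
    exact ae_of_ae_map measurable_snd.aemeasurable h
  have hlogμ_meas : AEStronglyMeasurable (fun x => log (fμ x)) (γ.map Prod.snd) :=
    hsnd ▸ hlogμ.aestronglyMeasurable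
  have hlogμγ : Integrable (fun p => log (fμ p.2)) γ :=
    (integrable_map_measure hlogμ_meas measurable_snd.aemeasurable).1 (hsnd ▸ hlogμ)
  have hllr_r : llr γ r =ᵐ[γ] fun p => llr γ (ν.prod μ) p + (log (fμ p.2) - log (k p)) := by
    filter_upwards [llr_ae_eq_llr_add_llr hγ hac, (hγ.trans hac).ae_le hrn, hfμ_pos]
      with p hp hp_rn hp_pos
    rw [hp, Pi.add_apply, add_right_inj, llr_def]
    beta_reduce
    rw [hp_rn,
      ENNReal.toReal_ofReal (div_pos hp_pos (hk₀ p)).le, log_div hp_pos.ne' (hk₀ p).ne']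
  rw [klDivR, integral_congr_ae hllr_r,
    integral_add (g := fun p => log (fμ p.2) - log (k p)) hllr (hlogμγ.sub hlogk),
    integral_sub hlogμγ hlogk, ← integral_map measurable_snd.aemeasurable hlogμ_meas, hsnd,
    klDivR, add_sub_assoc]

end MeasureTheory

noncomputable def heatKernel {d : ℕ} (T : ℝ)
    (p : EuclideanSpace ℝ (Fin d) × EuclideanSpace ℝ (Fin d)) : ℝ :=
  (2 * π * T) ^ (-(d : ℝ) / 2) * Real.exp (-‖p.2 - p.1‖ ^ 2 / (2 * T))

section heatKernel

variable {d : ℕ} {T : ℝ}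

lemma heatKernel_pos (hT : 0 < T) (p : EuclideanSpace ℝ (Fin d) × EuclideanSpace ℝ (Fin d)) :
    0 < heatKernel T p := by
  unfold heatKernel
  positivity

@[fun_prop]
lemma measurable_heatKernel : Measurable (heatKernel (d := d) T) := by
  unfold heatKernel
  fun_prop

lemma log_heatKernel (hT : 0 < T) (p : EuclideanSpace ℝ (Fin d) × EuclideanSpace ℝ (Fin d)) :
    log (heatKernel T p) = -(d / 2 * log (2 * π * T)) - ‖p.2 - p.1‖ ^ 2 / (2 * T) := by
  unfold heatKernel
  rw [log_mul (by positivity) (exp_pos _).ne', log_rpow (by positivity), log_exp]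
  ring

lemma integral_heatKernel (hT : 0 < T) (z : EuclideanSpace ℝ (Fin d)) :
    ∫ x, heatKernel T (z, x) = 1 := by
  have hgauss : ∀ v : EuclideanSpace ℝ (Fin d),
      rexp (-‖v‖ ^ 2 / (2 * T)) = rexp (-(2 * T)⁻¹ * ‖v‖ ^ 2) := fun v => by ring_nf
  simp only [heatKernel]
  rw [integral_const_mul, integral_sub_right_eq_self (fun v => rexp (-‖v‖ ^ 2 / (2 * T))) z]
  simp_rw [hgauss]
  rw [GaussianFourier.integral_rexp_neg_mul_sq_norm (by positivity), finrank_euclideanSpace_fin,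
    div_inv_eq_mul, show π * (2 * T) = 2 * π * T by ring, ← rpow_add (by positivity),
    neg_div, neg_add_cancel, rpow_zero]

lemma lintegral_heatKernel (hT : 0 < T) (z : EuclideanSpace ℝ (Fin d)) :
    ∫⁻ x, ENNReal.ofReal (heatKernel T (z, x)) = 1 := by
  rw [← ofReal_integral_eq_lintegral_ofReal
    (Integrable.of_integral_ne_zero (by rw [integral_heatKernel hT]; exact one_ne_zero))
    (ae_of_all _ fun x => (heatKernel_pos hT _).le), integral_heatKernel hT, ENNReal.ofReal_one]

lemma integrable_log_heatKernel (hT : 0 < T)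
    {γ : Measure (EuclideanSpace ℝ (Fin d) × EuclideanSpace ℝ (Fin d))} [IsFiniteMeasure γ]
    (hcost : Integrable (fun p => ‖p.2 - p.1‖ ^ 2) γ) :
    Integrable (fun p => log (heatKernel T p)) γ := by
  simp_rw [log_heatKernel hT]
  exact (integrable_const _).sub (hcost.div_const _)

lemma integral_log_heatKernel (hT : 0 < T)
    {γ : Measure (EuclideanSpace ℝ (Fin d) × EuclideanSpace ℝ (Fin d))} [IsProbabilityMeasure γ]
    (hcost : Integrable (fun p => ‖p.2 - p.1‖ ^ 2) γ) :
    ∫ p, log (heatKernel T p) ∂γ =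
      -(d / 2 * log (2 * π * T)) - 1 / (2 * T) * ∫ p, ‖p.2 - p.1‖ ^ 2 ∂γ := by
  simp_rw [log_heatKernel hT]
  rw [integral_sub (integrable_const _) (hcost.div_const _), integral_const, integral_div,
    probReal_univ, one_smul]
  ring

end heatKernel

theorem stmt0 {d : ℕ} {T : ℝ} (hT : 0 < T)
    (fν fμ : EuclideanSpace ℝ (Fin d) → ℝ)
    (ν μ : Measure (EuclideanSpace ℝ (Fin d)))
    [IsProbabilityMeasure ν] [IsProbabilityMeasure μ]
    (hν : ν = volume.withDensity fun x => ENNReal.ofReal (fν x))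
    (hμ : μ = volume.withDensity fun x => ENNReal.ofReal (fμ x))
    (r : Measure (EuclideanSpace ℝ (Fin d) × EuclideanSpace ℝ (Fin d)))
    (hr : r = volume.withDensity fun p => ENNReal.ofReal
      (fν p.1 * ((2 * π * T) ^ (-(d : ℝ) / 2) * Real.exp (-‖p.2 - p.1‖ ^ 2 / (2 * T)))))
    (hlogμ : Integrable (fun x => Real.log (fμ x)) μ) :
    (∀ π' : Measure (EuclideanSpace ℝ (Fin d) × EuclideanSpace ℝ (Fin d)),
      IsProbabilityMeasure π' →
      π'.map Prod.fst = ν → π'.map Prod.snd = μ →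
      π' ≪ ν.prod μ →
      Integrable (fun p => ‖p.2 - p.1‖ ^ 2) π' →
      Integrable (llr π' (ν.prod μ)) π' →
      klDivR π' r = (1 / (2 * T)) * ∫ p, ‖p.2 - p.1‖ ^ 2 ∂π' + klDivR π' (ν.prod μ)
        + ∫ x, Real.log (fμ x) ∂μ + (d / 2 : ℝ) * Real.log (2 * π * T)) ∧
    (∀ π₁ π₂ : Measure (EuclideanSpace ℝ (Fin d) × EuclideanSpace ℝ (Fin d)),
      IsProbabilityMeasure π₁ → IsProbabilityMeasure π₂ →
      π₁.map Prod.fst = ν → π₁.map Prod.snd = μ → π₁ ≪ ν.prod μ →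
      Integrable (fun p => ‖p.2 - p.1‖ ^ 2) π₁ → Integrable (llr π₁ (ν.prod μ)) π₁ →
      π₂.map Prod.fst = ν → π₂.map Prod.snd = μ → π₂ ≪ ν.prod μ →
      Integrable (fun p => ‖p.2 - p.1‖ ^ 2) π₂ → Integrable (llr π₂ (ν.prod μ)) π₂ →
      (klDivR π₁ r ≤ klDivR π₂ r ↔
        (∫ p, (1 / 2 : ℝ) * ‖p.2 - p.1‖ ^ 2 ∂π₁) + T * klDivR π₁ (ν.prod μ) ≤
          (∫ p, (1 / 2 : ℝ) * ‖p.2 - p.1‖ ^ 2 ∂π₂) + T * klDivR π₂ (ν.prod μ))) := by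
  obtain ⟨gν, hgν, hgν₀, hgν_le, hν'⟩ := exists_measurable_withDensity_ofReal_eq hν
  obtain ⟨gμ, hgμ, hgμ₀, hgμ_le, hμ'⟩ := exists_measurable_withDensity_ofReal_eq hμ
  have : IsFiniteMeasure (volume.withDensity fun x => ENNReal.ofReal (gν x)) := hν' ▸ inferInstance
  have : IsFiniteMeasure (volume.withDensity fun x => ENNReal.ofReal (gμ x)) := hμ' ▸ inferInstance
  have hr' : r = (volume.prod volume).withDensity
      fun p => ENNReal.ofReal (gν p.1 * heatKernel T p) :=
    hr.trans (withDensity_mul_kernel_eq hgν hgν_le (hν.symm.trans hν') measurable_heatKernel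
      (fun p => (heatKernel_pos hT p).le) (lintegral_heatKernel hT))
  have hlog_ae : (fun x => log (fμ x)) =ᵐ[μ] fun x => log (gμ x) := by
    rw [hμ'] at hlogμ ⊢
    exact (ae_eq_of_withDensity_ofReal_eq hgμ hgμ₀ hgμ_le (hμ.symm.trans hμ')
      hlogμ.aemeasurable).fun_comp log
  have key : ∀ π' : Measure (EuclideanSpace ℝ (Fin d) × EuclideanSpace ℝ (Fin d)),
      IsProbabilityMeasure π' → π'.map Prod.fst = ν → π'.map Prod.snd = μ → π' ≪ ν.prod μ →
      Integrable (fun p => ‖p.2 - p.1‖ ^ 2) π' → Integrable (llr π' (ν.prod μ)) π' →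
      klDivR π' r = (1 / (2 * T)) * ∫ p, ‖p.2 - p.1‖ ^ 2 ∂π' + klDivR π' (ν.prod μ)
        + ∫ x, log (fμ x) ∂μ + (d / 2 : ℝ) * log (2 * π * T) := by
    intro π' _ _ hsnd hac hcost hllr
    rw [klDivR_eq_klDivR_prod_add_integral_log hgν hgν₀ hgμ measurable_heatKernel
      (heatKernel_pos hT) hν' hμ' hr' hac hsnd hllr (hlogμ.congr hlog_ae)
      (integrable_log_heatKernel hT hcost), integral_log_heatKernel hT hcost,
      integral_congr_ae hlog_ae]
    ring
  refine ⟨key, fun π₁ π₂ hπ₁ hπ₂ hfst₁ hsnd₁ hac₁ hcost₁ hllr₁ hfst₂ hsnd₂ hac₂ hcost₂ hllr₂ => ?_⟩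
  have hscale : ∀ C K : ℝ, T * (1 / (2 * T) * C + K) = 1 / 2 * C + T * K := fun C K => by
    field_simp
  rw [key π₁ hπ₁ hfst₁ hsnd₁ hac₁ hcost₁ hllr₁, key π₂ hπ₂ hfst₂ hsnd₂ hac₂ hcost₂ hllr₂,
    integral_const_mul, integral_const_mul, add_le_add_iff_right, add_le_add_iff_right,
    ← mul_le_mul_iff_of_pos_left hT, hscale, hscale]
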